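/- Let G be a group, (Π,V) a representation of G of finite length, and τ an irreducible subquotient of Π occurring with multiplicity one. Let X be the set of pairs (U',W') of Π-stable subspaces of V with W' ⊆ U' and Π_{U'/W'} ≅ τ. If (U,W) ∈ X with U maximal (with respect to inclusion among first components of pairs in X), then for every (U',W') ∈ X one has U' ⊆ U, W' ⊆ W, and W' = W ∩ U'. -/
import Mathlib


/-- The subquotient module `U / W` (more precisely `U / (W ∩ U)`) associated to a pair of
submodules of `V`. -/
abbrev SubQuot (R : Type*) [Ring R] {V : Type*} [AddCommGroup V] [Module R V]
    (W U : Submodule R V) :=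
  ↥U ⧸ Submodule.comap U.subtype W

/-- `s` is a composition series of the module `V`. -/
def IsCompSeries (R : Type*) [Ring R] {V : Type*} [AddCommGroup V] [Module R V] {k : ℕ}
    (s : Fin (k + 1) → Submodule R V) : Prop :=
  s 0 = ⊥ ∧ s (Fin.last k) = ⊤ ∧
    ∀ i : Fin k, s i.castSucc ≤ s i.succ ∧
      IsSimpleModule R (SubQuot R (s i.castSucc) (s i.succ))

/-- `τ` occurs with multiplicity one among the Jordan–Hölder factors of `V`. -/
def MultOne (R : Type*) [Ring R] (V : Type*) [AddCommGroup V] [Module R V]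
    (τ : Type*) [AddCommGroup τ] [Module R τ] : Prop :=
  ∀ (k : ℕ) (s : Fin (k + 1) → Submodule R V), IsCompSeries R s →
    ∃! i : Fin k, Nonempty (SubQuot R (s i.castSucc) (s i.succ) ≃ₗ[R] τ)

section Aux

variable {R : Type*} [Ring R] {V : Type*} [AddCommGroup V] [Module R V]

/-- A chain with simple subquotients from `N` to `M`. -/
def IsSimpleChain (R : Type*) [Ring R] {V : Type*} [AddCommGroup V] [Module R V]
    (N M : Submodule R V) {k : ℕ} (s : Fin (k + 1) → Submodule R V) : Prop :=
  s 0 = N ∧ s (Fin.last k) = M ∧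
    ∀ i : Fin k, s i.castSucc ≤ s i.succ ∧
      IsSimpleModule R (SubQuot R (s i.castSucc) (s i.succ))

lemma stepOK_congr {A B A' B' : Submodule R V} (hA : A = A') (hB : B = B') :
    (A ≤ B ∧ IsSimpleModule R (SubQuot R A B)) ↔
      (A' ≤ B' ∧ IsSimpleModule R (SubQuot R A' B')) := by
  subst hA; subst hB; exact Iff.rfl

lemma subquot_iso_congr {A B A' B' : Submodule R V} (hA : A = A') (hB : B = B')
    {C : Type*} [AddCommGroup C] [Module R C] :
    Nonempty (SubQuot R A B ≃ₗ[R] C) ↔ Nonempty (SubQuot R A' B' ≃ₗ[R] C) := by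
  subst hA; subst hB; exact Iff.rfl

lemma nonempty_symm {α β : Type*} [AddCommGroup α] [Module R α] [AddCommGroup β] [Module R β]
    (h : Nonempty (α ≃ₗ[R] β)) : Nonempty (β ≃ₗ[R] α) := ⟨h.some.symm⟩

lemma nonempty_trans {α β γ : Type*} [AddCommGroup α] [Module R α] [AddCommGroup β] [Module R β]
    [AddCommGroup γ] [Module R γ]
    (h1 : Nonempty (α ≃ₗ[R] β)) (h2 : Nonempty (β ≃ₗ[R] γ)) : Nonempty (α ≃ₗ[R] γ) :=
  ⟨h1.some.trans h2.some⟩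

/-- Concatenation of two chains. -/
def catC {k l : ℕ} (s : Fin (k + 1) → Submodule R V) (t : Fin (l + 1) → Submodule R V) :
    Fin (k + l + 1) → Submodule R V :=
  fun i => if h : (i : ℕ) ≤ k then s ⟨i, by omega⟩
    else t ⟨(i : ℕ) - k, by have := i.isLt; omega⟩

lemma catC_left {k l : ℕ} (s : Fin (k + 1) → Submodule R V) (t : Fin (l + 1) → Submodule R V)
    (j : ℕ) (hj : j ≤ k) (hj2 : j < k + l + 1) :
    catC s t ⟨j, hj2⟩ = s ⟨j, by omega⟩ := dif_pos hj

lemma catC_right {k l : ℕ} (s : Fin (k + 1) → Submodule R V) (t : Fin (l + 1) → Submodule R V)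
    (hst : s (Fin.last k) = t 0) (j : ℕ) (hj : k ≤ j) (hj2 : j < k + l + 1) :
    catC s t ⟨j, hj2⟩ = t ⟨j - k, by omega⟩ := by
  rcases eq_or_lt_of_le hj with h' | h'
  · obtain rfl : j = k := h'.symm
    have e0 : catC s t ⟨j, hj2⟩ = s ⟨j, by omega⟩ := dif_pos le_rfl
    rw [e0]
    have e1 : (⟨j, by omega⟩ : Fin (j + 1)) = Fin.last j := rfl
    rw [e1, hst]
    congr 1
    apply Fin.ext
    simp only [Fin.val_mk, Fin.val_zero]
    omega
  · refine dif_neg ?_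
    simp only [Fin.val_mk]
    omega

lemma IsSimpleChain.cat {N M P : Submodule R V} {k l : ℕ}
    {s : Fin (k + 1) → Submodule R V} {t : Fin (l + 1) → Submodule R V}
    (hs : IsSimpleChain R N M s) (ht : IsSimpleChain R M P t) :
    IsSimpleChain R N P (catC s t) := by
  have hst : s (Fin.last k) = t 0 := hs.2.1.trans ht.1.symm
  refine ⟨?_, ?_, ?_⟩
  · have h0 : (0 : Fin (k + l + 1)) = ⟨0, by omega⟩ := rfl
    rw [h0, catC_left s t 0 (by omega), ← hs.1]
    congr 1
  · have h0 : (Fin.last (k + l)) = ⟨k + l, by omega⟩ := rfl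
    rw [h0, catC_right s t hst (k + l) (by omega), ← ht.2.1]
    congr 1
    apply Fin.ext
    simp only [Fin.val_mk, Fin.val_last]
    omega
  · intro i
    have h1 : (i.castSucc : Fin (k + l + 1)) = ⟨(i : ℕ), by omega⟩ := rfl
    have h2 : (i.succ : Fin (k + l + 1)) = ⟨(i : ℕ) + 1, by omega⟩ := rfl
    rcases lt_or_ge (i : ℕ) k with h | h
    · have e1 : catC s t i.castSucc = s ((⟨(i : ℕ), h⟩ : Fin k).castSucc) := by
        rw [h1, catC_left s t _ (by omega)]
        congr 1
      have e2 : catC s t i.succ = s ((⟨(i : ℕ), h⟩ : Fin k).succ) := by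
        rw [h2, catC_left s t _ (by omega)]
        congr 1
      exact (stepOK_congr e1 e2).mpr (hs.2.2 _)
    · have hlt : (i : ℕ) - k < l := by have := i.isLt; omega
      have e1 : catC s t i.castSucc = t ((⟨(i : ℕ) - k, hlt⟩ : Fin l).castSucc) := by
        rw [h1, catC_right s t hst _ (by omega)]
        congr 1
      have e2 : catC s t i.succ = t ((⟨(i : ℕ) - k, hlt⟩ : Fin l).succ) := by
        rw [h2, catC_right s t hst _ (by omega)]
        congr 1
        apply Fin.ext
        simp only [Fin.val_mk, Fin.val_succ]
        omega
      exact (stepOK_congr e1 e2).mpr (ht.2.2 _)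

end Aux
section Aux2

variable {R : Type*} [Ring R] {V : Type*} [AddCommGroup V] [Module R V]

lemma pair_chain {N M : Submodule R V} (h : N ≤ M) (hs : IsSimpleModule R (SubQuot R N M)) :
    IsSimpleChain R N M (fun i : Fin 2 => if i = 0 then N else M) := by
  refine ⟨if_pos rfl, if_neg (by decide), fun i => ?_⟩
  have h0 : i = 0 := Subsingleton.elim _ _
  subst h0
  have e1 : (if ((0 : Fin 1).castSucc : Fin 2) = 0 then N else M) = N := if_pos rfl
  have e2 : (if ((0 : Fin 1).succ : Fin 2) = 0 then N else M) = M := if_neg (by decide)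
  exact (stepOK_congr e1 e2).mpr ⟨h, hs⟩

lemma chain_exists [IsNoetherian R V] [IsArtinian R V] :
    ∀ M N : Submodule R V, N ≤ M →
      ∃ (k : ℕ) (s : Fin (k + 1) → Submodule R V), IsSimpleChain R N M s := by
  intro M
  induction M using WellFoundedLT.induction with
  | _ M IH =>
    intro N hNM
    rcases eq_or_lt_of_le hNM with rfl | hlt
    · exact ⟨0, fun _ => N, rfl, rfl, fun i => i.elim0⟩
    · obtain ⟨P, ⟨hNP, hPM⟩, hPmax⟩ :=
        set_has_maximal_iff_noetherian.mpr ‹IsNoetherian R V›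
          {Q | N ≤ Q ∧ Q < M} ⟨N, le_refl N, hlt⟩
      have cov : P ⋖ M := ⟨hPM, fun {c} hPc hcM => hPmax c ⟨hNP.trans hPc.le, hcM⟩ hPc⟩
      obtain ⟨k, s, hs⟩ := IH P hPM N hNP
      exact ⟨k + 1, catC s (fun i : Fin 2 => if i = 0 then P else M),
        hs.cat (pair_chain hPM.le ((covBy_iff_quot_is_simple hPM.le).mp cov))⟩

lemma two_steps {τ : Type*} [AddCommGroup τ] [Module R τ] [IsSimpleModule R τ]
    [IsNoetherian R V] [IsArtinian R V] (hmult : MultOne R V τ)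
    {A B C D : Submodule R V} (hAB : A ≤ B) (hBC : B ≤ C) (hCD : C ≤ D)
    (h1 : Nonempty (SubQuot R A B ≃ₗ[R] τ)) (h2 : Nonempty (SubQuot R C D ≃ₗ[R] τ)) :
    False := by
  obtain ⟨a, s1, hs1⟩ := chain_exists A ⊥ bot_le
  obtain ⟨b, s2, hs2⟩ := chain_exists C B hBC
  obtain ⟨c, s3, hs3⟩ := chain_exists ⊤ D le_top
  have simpAB : IsSimpleModule R (SubQuot R A B) := IsSimpleModule.congr h1.some
  have simpCD : IsSimpleModule R (SubQuot R C D) := IsSimpleModule.congr h2.some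
  set pAB : Fin 2 → Submodule R V := fun i => if i = 0 then A else B with hpAB
  set pCD : Fin 2 → Submodule R V := fun i => if i = 0 then C else D with hpCD
  have hc1 : IsSimpleChain R ⊥ B (catC s1 pAB) := hs1.cat (pair_chain hAB simpAB)
  have hc2 : IsSimpleChain R ⊥ C (catC (catC s1 pAB) s2) := hc1.cat hs2
  have hc3 : IsSimpleChain R ⊥ D (catC (catC (catC s1 pAB) s2) pCD) :=
    hc2.cat (pair_chain hCD simpCD)
  have hc4 : IsSimpleChain R ⊥ (⊤ : Submodule R V)
      (catC (catC (catC (catC s1 pAB) s2) pCD) s3) := hc3.cat hs3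
  set u := catC (catC (catC (catC s1 pAB) s2) pCD) s3 with hu
  have hb1 : s1 (Fin.last a) = pAB 0 := hs1.2.1.trans (if_pos rfl).symm
  have hb3 : catC (catC s1 pAB) s2 (Fin.last (a + 1 + b)) = pCD 0 :=
    hc2.2.1.trans (if_pos rfl).symm
  have hb4 : catC (catC (catC s1 pAB) s2) pCD (Fin.last (a + 1 + b + 1)) = s3 0 :=
    hc3.2.1.trans hs3.1.symm
  -- values of u at the four interesting indices
  have vA : ∀ h : a < a + 1 + b + 1 + c + 1, u ⟨a, h⟩ = A := by
    intro h
    rw [hu, catC_left _ _ a (by omega), catC_left _ _ a (by omega),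
      catC_left _ _ a (by omega), catC_left _ _ a (by omega)]
    have e : (⟨a, by omega⟩ : Fin (a + 1)) = Fin.last a := rfl
    rw [e, hs1.2.1]
  have vB : ∀ h : a + 1 < a + 1 + b + 1 + c + 1, u ⟨a + 1, h⟩ = B := by
    intro h
    rw [hu, catC_left _ _ (a + 1) (by omega), catC_left _ _ (a + 1) (by omega),
      catC_left _ _ (a + 1) (by omega), catC_right _ _ hb1 (a + 1) (by omega)]
    have e : (⟨a + 1 - a, by omega⟩ : Fin 2) = 1 := by
      apply Fin.ext; simp only [Fin.val_mk, Fin.val_one]; omega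
    rw [e, hpAB]
    exact if_neg (by decide)
  have vC : ∀ h : a + 1 + b < a + 1 + b + 1 + c + 1, u ⟨a + 1 + b, h⟩ = C := by
    intro h
    rw [hu, catC_left _ _ (a + 1 + b) (by omega),
      catC_right _ _ hb3 (a + 1 + b) (by omega)]
    have e : (⟨a + 1 + b - (a + 1 + b), by omega⟩ : Fin 2) = 0 := by
      apply Fin.ext; simp only [Fin.val_mk, Fin.val_zero]; omega
    rw [e, hpCD]
    exact if_pos rfl
  have vD : ∀ h : a + 1 + b + 1 < a + 1 + b + 1 + c + 1, u ⟨a + 1 + b + 1, h⟩ = D := by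
    intro h
    rw [hu, catC_right _ _ hb4 (a + 1 + b + 1) (by omega)]
    have e : (⟨a + 1 + b + 1 - (a + 1 + b + 1), by omega⟩ : Fin (c + 1)) = 0 := by
      apply Fin.ext; simp only [Fin.val_mk, Fin.val_zero]; omega
    rw [e, hs3.1]
  have hcomp : IsCompSeries R u := ⟨hc4.1, hc4.2.1, hc4.2.2⟩
  obtain ⟨i, -, huniq⟩ := hmult (a + 1 + b + 1 + c) u hcomp
  have w1 : Nonempty (SubQuot R (u ((⟨a, by omega⟩ : Fin (a + 1 + b + 1 + c)).castSucc))
      (u ((⟨a, by omega⟩ : Fin (a + 1 + b + 1 + c)).succ)) ≃ₗ[R] τ) := by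
    have c1 : u ((⟨a, by omega⟩ : Fin (a + 1 + b + 1 + c)).castSucc) = A := vA _
    have c2 : u ((⟨a, by omega⟩ : Fin (a + 1 + b + 1 + c)).succ) = B := vB _
    exact (subquot_iso_congr c1 c2).mpr h1
  have w2 : Nonempty (SubQuot R (u ((⟨a + 1 + b, by omega⟩ : Fin (a + 1 + b + 1 + c)).castSucc))
      (u ((⟨a + 1 + b, by omega⟩ : Fin (a + 1 + b + 1 + c)).succ)) ≃ₗ[R] τ) := by
    have c1 : u ((⟨a + 1 + b, by omega⟩ : Fin (a + 1 + b + 1 + c)).castSucc) = C := vC _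
    have c2 : u ((⟨a + 1 + b, by omega⟩ : Fin (a + 1 + b + 1 + c)).succ) = D := vD _
    exact (subquot_iso_congr c1 c2).mpr h2
  have e12 : (⟨a, by omega⟩ : Fin (a + 1 + b + 1 + c)) = ⟨a + 1 + b, by omega⟩ :=
    (huniq _ w1).trans (huniq _ w2).symm
  have := congrArg Fin.val e12
  simp only [Fin.val_mk] at this
  omega

end Aux2
section Aux3

variable {R : Type*} [Ring R] {V : Type*} [AddCommGroup V] [Module R V]

lemma covOf {τ : Type*} [AddCommGroup τ] [Module R τ] [IsSimpleModule R τ]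
    {N M : Submodule R V} (h : N ≤ M) (hiso : Nonempty (SubQuot R N M ≃ₗ[R] τ)) :
    N ⋖ M :=
  (covBy_iff_quot_is_simple h).mpr (IsSimpleModule.congr hiso.some)

lemma siso (p p' : Submodule R V) :
    Nonempty (SubQuot R (p ⊓ p') p ≃ₗ[R] SubQuot R p' (p ⊔ p')) :=
  ⟨LinearMap.quotientInfEquivSupQuotient p p'⟩

end Aux3

theorem statement0 {R : Type*} [Ring R] {V : Type*} [AddCommGroup V] [Module R V]
    (hfl : IsFiniteLength R V)
    {τ : Type*} [AddCommGroup τ] [Module R τ] (hτ : IsSimpleModule R τ)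
    (hmult : MultOne R V τ)
    (U W : Submodule R V) (hWU : W ≤ U) (hiso : Nonempty (SubQuot R W U ≃ₗ[R] τ))
    (hmax : ∀ U₁ W₁ : Submodule R V, W₁ ≤ U₁ →
      Nonempty (SubQuot R W₁ U₁ ≃ₗ[R] τ) → U ≤ U₁ → U₁ = U) :
    ∀ U' W' : Submodule R V, W' ≤ U' → Nonempty (SubQuot R W' U' ≃ₗ[R] τ) →
      U' ≤ U ∧ W' ≤ W ∧ W' = W ⊓ U' := by
  obtain ⟨hN, hA⟩ := isFiniteLength_iff_isNoetherian_isArtinian.mp hfl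
  haveI := hN; haveI := hA; haveI := hτ
  intro U' W' hW'U' hiso'
  have covWU : W ⋖ U := covOf hWU hiso
  have covW' : W' ⋖ U' := covOf hW'U' hiso'
  -- Step 1 : U' ≤ U
  have hU'U : U' ≤ U := by
    rcases covW'.eq_or_eq (c := U' ⊓ (U ⊔ W')) (le_inf hW'U' le_sup_right) inf_le_left
      with hP | hP
    · -- U' ⊓ (U ⊔ W') = W' : contradiction via two steps W ≤ U ≤ U ⊔ W' ≤ U ⊔ U'
      exfalso
      have f0 := siso U' (U ⊔ W')
      have e2 : U' ⊔ (U ⊔ W') = U ⊔ U' := by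
        rw [← sup_assoc, sup_comm U' U]
        exact sup_eq_left.mpr (hW'U'.trans le_sup_right)
      have f1 : Nonempty (SubQuot R W' U' ≃ₗ[R] SubQuot R (U ⊔ W') (U' ⊔ (U ⊔ W'))) :=
        (subquot_iso_congr hP rfl).mp f0
      have f2 : Nonempty (SubQuot R (U ⊔ W') (U ⊔ U') ≃ₗ[R] τ) := by
        refine nonempty_trans ((subquot_iso_congr rfl e2).mp (nonempty_symm f1)) hiso'
      exact two_steps hmult hWU le_sup_left (sup_le_sup_left hW'U' U) hiso f2
    · -- U' ⊓ (U ⊔ W') = U' , i.e. U' ≤ U ⊔ W'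
      have hU'UW' : U' ≤ U ⊔ W' := hP ▸ inf_le_right
      rcases covWU.eq_or_eq (c := U ⊓ (W ⊔ W')) (le_inf hWU le_sup_left) inf_le_left
        with hQ | hQ
      · -- U ⊓ (W ⊔ W') = W : apply hmax to (U ⊔ W', W ⊔ W')
        have hiso2 : Nonempty (SubQuot R (W ⊔ W') (U ⊔ W') ≃ₗ[R] τ) := by
          have f0 := siso U (W ⊔ W')
          have e : U ⊔ (W ⊔ W') = U ⊔ W' := by rw [← sup_assoc, sup_eq_left.mpr hWU]
          have g1 := nonempty_symm f0
          have g2 := (subquot_iso_congr rfl e).mp g1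
          have g3 := (subquot_iso_congr hQ rfl).mp (nonempty_symm g2)
          exact nonempty_trans (nonempty_symm g3) hiso
        have : U ⊔ W' = U :=
          hmax (U ⊔ W') (W ⊔ W') (sup_le_sup_right hWU W') hiso2 le_sup_left
        exact hU'UW'.trans this.le
      · -- U ⊓ (W ⊔ W') = U , i.e. U ≤ W ⊔ W' : contradiction
        exfalso
        have hUWW' : U ≤ W ⊔ W' := hQ ▸ inf_le_right
        have f0 := siso (U ⊓ W') W
        have e : (U ⊓ W') ⊔ W = U := by
          rw [sup_comm, inf_comm, ← sup_inf_assoc_of_le _ hWU]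
          exact inf_eq_right.mpr hUWW'
        have g2 := (subquot_iso_congr rfl e).mp (nonempty_symm f0)
        have f1 : Nonempty (SubQuot R ((U ⊓ W') ⊓ W) (U ⊓ W') ≃ₗ[R] τ) :=
          nonempty_trans (nonempty_symm g2) hiso
        exact two_steps hmult inf_le_left inf_le_right hW'U' f1 hiso'
  -- Step 2 : W ⊓ U' ≤ W'
  have hWU'W' : W ⊓ U' ≤ W' := by
    rcases covW'.eq_or_eq (c := W' ⊔ (W ⊓ U')) le_sup_left (sup_le hW'U' inf_le_right)
      with hP | hP
    · exact le_sup_right.trans hP.le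
    · exfalso
      have f0 := siso (W ⊓ U') W'
      have e : (W ⊓ U') ⊔ W' = U' := by rw [sup_comm]; exact hP
      have g2 := (subquot_iso_congr rfl e).mp (nonempty_symm f0)
      have f1 : Nonempty (SubQuot R ((W ⊓ U') ⊓ W') (W ⊓ U') ≃ₗ[R] τ) :=
        nonempty_trans (nonempty_symm g2) hiso'
      exact two_steps hmult inf_le_left inf_le_left hWU f1 hiso
  -- Step 3 : W' ≤ W
  have hW'W : W' ≤ W := by
    rcases covWU.eq_or_eq (c := W ⊔ W') le_sup_left (sup_le hWU (hW'U'.trans hU'U))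
      with hQ | hQ
    · exact le_sup_right.trans hQ.le
    · exfalso
      have hUWW' : U ≤ W ⊔ W' := hQ.ge
      have f0 := siso (U ⊓ W') W
      have e : (U ⊓ W') ⊔ W = U := by
        rw [sup_comm, inf_comm, ← sup_inf_assoc_of_le _ hWU]
        exact inf_eq_right.mpr hUWW'
      have e2 : U ⊓ W' = W' := inf_eq_right.mpr (hW'U'.trans hU'U)
      have f1 : Nonempty (SubQuot R (W' ⊓ W) W' ≃ₗ[R] τ) := by
        have g2 := (subquot_iso_congr rfl e).mp (nonempty_symm f0)
        have g3 : Nonempty (SubQuot R ((U ⊓ W') ⊓ W) (U ⊓ W') ≃ₗ[R] τ) :=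
          nonempty_trans (nonempty_symm g2) hiso
        exact (subquot_iso_congr (by rw [e2]) e2).mp g3
      exact two_steps hmult inf_le_left le_rfl hW'U' f1 hiso'
  exact ⟨hU'U, hW'W, le_antisymm (le_inf hW'W hW'U') hWU'W'⟩
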